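/- arXiv:1812.04848 — 4 statements merged into one kernel-verified Lean document; each statement's English description precedes it below -/
import Mathlib

section
/- Let v̲ < v̄, let h : [v̲,v̄] → ℝ be differentiable with h(t) > 0 and h'(t) > 0 for all t ∈ (v̲,v̄], let b : [v̲,v̄] → [0,∞) satisfy b(t) > 0 for all t ∈ (v̲,v̄], and let p(b,v) be a payment function, differentiable in v, with p(β,t) > 0 whenever β > 0 and (∂p/∂v)(β,t) ≤ 0 for all β ≥ 0, t ∈ [v̲,v̄]. Assume the function t ↦ [ (∂p/∂v)(b(t),t)·h(t) − p(b(t),t)·h'(t) ] / h(t)² is integrable on [v̲, v]. Then for every v ∈ (v̲, v̄]: u(v) := −h(v) · ∫_{v̲}^{v} [ (∂p/∂v)(b(t),t)·h(t) − p(b(t),t)·h'(t) ] / h(t)² dt > 0. In particular, the mechanism satisfies individual rationality: every agent who exerts positive effort reaps strictly positive equilibrium utility. -/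
open intervalIntegral

/-! The integrand is the `t`-derivative of `p(β, t) / h(t)` at `β = b(t)`. Since `p` is
nonincreasing in the type, positive at positive effort, and `h` is positive and increasing,
it is strictly negative on `(v̲, v)`; hence the integral is negative and `u(v) > 0`. -/

theorem intervalIntegral_neg_of_neg_on {f : ℝ → ℝ} {a b : ℝ}
    (hfi : IntervalIntegrable f MeasureTheory.volume a b) (hneg : ∀ x ∈ Set.Ioo a b, f x < 0)
    (hab : a < b) : ∫ x in a..b, f x < 0 := by
  have hpos : 0 < ∫ x in a..b, -f x :=
    intervalIntegral_pos_of_pos_on hfi.neg (fun x hx => neg_pos.mpr (hneg x hx)) hab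
  rwa [integral_neg, neg_pos] at hpos

theorem quotient_derivative_neg_of_nonpos_of_pos {dp p h dh : ℝ} (hdp : dp ≤ 0) (hp : 0 < p)
    (hh : 0 < h) (hdh : 0 < dh) : (dp * h - p * dh) / h ^ 2 < 0 := by
  have hnum : dp * h - p * dh < 0 := by nlinarith [mul_pos hp hdh]
  exact div_neg_of_neg_of_pos hnum (by positivity)

theorem stmt_2_general
    (vlo vhi : ℝ)
    (h : ℝ → ℝ)
    (hpos : ∀ t ∈ Set.Ioc vlo vhi, 0 < h t)
    (h'pos : ∀ t ∈ Set.Ioc vlo vhi, 0 < deriv h t)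
    (b : ℝ → ℝ)
    (hbpos : ∀ t ∈ Set.Ioc vlo vhi, 0 < b t)
    (p : ℝ → ℝ → ℝ)
    (hppos : ∀ β : ℝ, ∀ t ∈ Set.Icc vlo vhi, 0 < β → 0 < p β t)
    (hpv : ∀ β : ℝ, 0 ≤ β → ∀ t ∈ Set.Icc vlo vhi, deriv (p β) t ≤ 0)
    (hint : ∀ v ∈ Set.Ioc vlo vhi,
      IntervalIntegrable
        (fun t => (deriv (p (b t)) t * h t - p (b t) t * deriv h t) / (h t) ^ 2)
        MeasureTheory.volume vlo v) :
    ∀ v ∈ Set.Ioc vlo vhi,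
      0 < -(h v) *
        ∫ t in vlo..v,
          (deriv (p (b t)) t * h t - p (b t) t * deriv h t) / (h t) ^ 2 := by
  intro v hv
  have hintegrand_neg : ∀ t ∈ Set.Ioo vlo v,
      (deriv (p (b t)) t * h t - p (b t) t * deriv h t) / (h t) ^ 2 < 0 := by
    intro t ht
    have htIoc : t ∈ Set.Ioc vlo vhi := ⟨ht.1, ht.2.le.trans hv.2⟩
    have htIcc : t ∈ Set.Icc vlo vhi := Set.Ioc_subset_Icc_self htIoc
    exact quotient_derivative_neg_of_nonpos_of_pos
      (hpv _ (hbpos t htIoc).le t htIcc) (hppos _ t htIcc (hbpos t htIoc))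
      (hpos t htIoc) (h'pos t htIoc)
  exact mul_pos_of_neg_of_neg (neg_neg_of_pos (hpos v hv))
    (intervalIntegral_neg_of_neg_on (hint v hv) hintegrand_neg hv.1)

/-- **Individual rationality of the OPT mechanism (Proposition 2).**
With value-scaling function `h` differentiable, positive and strictly increasing on
`(vlo, vhi]`, equilibrium efforts `b t > 0` for `t ∈ (vlo, vhi]`, and payment function
`p` differentiable in the type with `p β t > 0` for `β > 0` and `∂p/∂v ≤ 0`:
for every type `v ∈ (vlo, vhi]` the equilibrium utility
`u(v) = −h(v) ∫_{vlo}^{v} [p'_v(b(t),t) h(t) − p(b(t),t) h'(t)] / h(t)² dt`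
is strictly positive.  In particular every agent exerting positive effort reaps
strictly positive utility. -/
theorem stmt_2
    (vlo vhi : ℝ) (hlohi : vlo < vhi)
    (h : ℝ → ℝ) (hdiff : Differentiable ℝ h)
    (hpos : ∀ t ∈ Set.Ioc vlo vhi, 0 < h t)
    (h'pos : ∀ t ∈ Set.Ioc vlo vhi, 0 < deriv h t)
    (b : ℝ → ℝ) (hbnonneg : ∀ t ∈ Set.Icc vlo vhi, 0 ≤ b t)
    (hbpos : ∀ t ∈ Set.Ioc vlo vhi, 0 < b t)
    (p : ℝ → ℝ → ℝ)
    (hpdiff : ∀ β : ℝ, Differentiable ℝ (p β))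
    (hppos : ∀ β : ℝ, ∀ t ∈ Set.Icc vlo vhi, 0 < β → 0 < p β t)
    (hpv : ∀ β : ℝ, 0 ≤ β → ∀ t ∈ Set.Icc vlo vhi, deriv (p β) t ≤ 0)
    (hint : ∀ v ∈ Set.Ioc vlo vhi,
      IntervalIntegrable
        (fun t => (deriv (p (b t)) t * h t - p (b t) t * deriv h t) / (h t) ^ 2)
        MeasureTheory.volume vlo v) :
    ∀ v ∈ Set.Ioc vlo vhi,
      0 < -(h v) *
        ∫ t in vlo..v,
          (deriv (p (b t)) t * h t - p (b t) t * deriv h t) / (h t) ^ 2 :=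
  stmt_2_general vlo vhi h hpos h'pos b hbpos p hppos hpv hint
end

section
/- Consider a two-player asymmetric all-pay contest with incomplete information: types lie in [v̲, v̄] with 0 ≤ v̲ < v̄, the c.d.f.s F₁, F₂ are differentiable with continuous positive densities F₁', F₂' on [v̲,v̄], the prize is fixed and a winner of type v values it at v, and the payment function p : [0,∞) → [0,∞) is continuous, strictly increasing, surjective onto [0,∞) with p(0) = 0. Let k : [v̲,v̄] → [v̲,v̄] be a strictly increasing differentiable bijection with k(v̄) = v̄, k(v̲) = v̲, satisfying the ODE k'(v) = k(v)·F₁'(v) / ( v·F₂'(k(v)) ) on (v̲,v̄]. Define b₁(v) = p^{-1}( ∫_{v̲}^{v} k(t)·F₁'(t) dt ) and b₂(v) = b₁(k^{-1}(v)). Then (b₁, b₂) is a Bayesian Nash equilibrium in the sense that no mimicking deviation is profitable: for all v₁, w ∈ [v̲,v̄], v₁·F₂(k(w)) − p(b₁(w)) ≤ v₁·F₂(k(v₁)) − p(b₁(v₁)), and for all v₂, w ∈ [v̲,v̄], v₂·F₁(k^{-1}(w)) − p(b₂(w)) ≤ v₂·F₁(k^{-1}(v₂)) − p(b₂(v₂)).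 -/
open Set intervalIntegral

/-!
Write `G w = ∫_{v̲}^{w} k F₁'`, so that `p (b₁ w) = G w`. For player 1 the mimicking payoff
`x ↦ v₁ F₂(k x) − G x` has derivative `(k x F₁'(x) / x) (v₁ − x)` by the ODE for `k`, and for
player 2, after writing the bid as `w = k x`, the payoff `x ↦ v₂ F₁(x) − G x` has derivative
`F₁'(x) (v₂ − k x)`. In both cases the derivative is a nonnegative factor times `m c − m x` for a
monotone `m` and the truthful type `c`, so the payoff increases up to `c` and decreases after it.
-/

lemma isMaxOn_Icc_of_hasDerivAt_mul_sub {f ρ m : ℝ → ℝ} {a b c : ℝ} (hc : c ∈ Icc a b)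
    (hf : ContinuousOn f (Icc a b)) (hm : MonotoneOn m (Icc a b))
    (hρ : ∀ x ∈ Ioo a b, 0 ≤ ρ x)
    (hf' : ∀ x ∈ Ioo a b, HasDerivAt f (ρ x * (m c - m x)) x) :
    IsMaxOn f (Icc a b) c := by
  refine isMaxOn_Icc_of_mono_anti ?_ ?_
  · refine monotoneOn_of_hasDerivWithinAt_nonneg (f' := fun x => ρ x * (m c - m x))
      (convex_Icc a c) (hf.mono (Icc_subset_Icc_right hc.2)) (fun x hx => ?_) (fun x hx => ?_)
      <;> rw [interior_Icc] at hx
    · exact (hf' x ⟨hx.1, hx.2.trans_le hc.2⟩).hasDerivWithinAt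
    · exact mul_nonneg (hρ x ⟨hx.1, hx.2.trans_le hc.2⟩)
        (sub_nonneg.2 (hm ⟨hx.1.le, hx.2.le.trans hc.2⟩ hc hx.2.le))
  · refine antitoneOn_of_hasDerivWithinAt_nonpos (f' := fun x => ρ x * (m c - m x))
      (convex_Icc c b) (hf.mono (Icc_subset_Icc_left hc.1)) (fun x hx => ?_) (fun x hx => ?_)
      <;> rw [interior_Icc] at hx
    · exact (hf' x ⟨hc.1.trans_lt hx.1, hx.2⟩).hasDerivWithinAt
    · exact mul_nonpos_of_nonneg_of_nonpos (hρ x ⟨hc.1.trans_lt hx.1, hx.2⟩)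
        (sub_nonpos.2 (hm hc ⟨hc.1.trans hx.1.le, hx.2.le⟩ hx.1.le))

lemma continuousOn_primitive_of_continuousOn {g : ℝ → ℝ} {a b : ℝ}
    (hg : ContinuousOn g (Icc a b)) :
    ContinuousOn (fun x => ∫ t in a..x, g t) (Icc a b) :=
  (continuousOn_primitive hg.integrableOn_Icc).congr fun _ hx => integral_of_le hx.1

lemma hasDerivAt_primitive_of_continuousOn {g : ℝ → ℝ} {a b x : ℝ}
    (hg : ContinuousOn g (Icc a b)) (hx : x ∈ Ioo a b) :
    HasDerivAt (fun y => ∫ t in a..y, g t) (g x) x := by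
  have hsub : uIcc a x ⊆ Icc a b := by
    rw [uIcc_of_le hx.1.le]
    exact Icc_subset_Icc_right hx.2.le
  exact integral_hasDerivAt_right (hg.mono hsub).intervalIntegrable
    ((hg.mono Ioo_subset_Icc_self).stronglyMeasurableAtFilter isOpen_Ioo x hx)
    (hg.continuousAt (Icc_mem_nhds hx.1 hx.2))

lemma hasDerivAt_const_mul_comp_sub {F k G : ℝ → ℝ} {F' φ v x : ℝ} (hx : x ≠ 0)
    (hF : HasDerivAt F F' (k x)) (hF' : F' ≠ 0) (hk : HasDerivAt k (k x * φ / (x * F')) x)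
    (hG : HasDerivAt G (k x * φ) x) :
    HasDerivAt (fun y => v * F (k y) - G y) (k x * φ / x * (v - x)) x := by
  refine (((hF.comp x hk).const_mul v).sub hG).congr_deriv ?_
  field_simp

theorem stmt_3_general
    (vlo vhi : ℝ) (hlo : 0 ≤ vlo)
    (F1 F2 : ℝ → ℝ)
    (hF1 : Differentiable ℝ F1) (hF2 : Differentiable ℝ F2)
    (hF1' : ContinuousOn (deriv F1) (Set.Icc vlo vhi))
    (hF1pos : ∀ v ∈ Set.Icc vlo vhi, 0 < deriv F1 v)
    (hF2pos : ∀ v ∈ Set.Icc vlo vhi, 0 < deriv F2 v)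
    (p : ℝ → ℝ)
    (pinv : ℝ → ℝ)
    (hpinv_right : ∀ y : ℝ, 0 ≤ y → p (pinv y) = y)
    (k : ℝ → ℝ)
    (hkmono : StrictMonoOn k (Set.Icc vlo vhi))
    (hkdiff : ∀ v ∈ Set.Icc vlo vhi, DifferentiableAt ℝ k v)
    (hkbij : Set.BijOn k (Set.Icc vlo vhi) (Set.Icc vlo vhi))
    (hODE : ∀ v ∈ Set.Ioc vlo vhi,
      deriv k v = k v * deriv F1 v / (v * deriv F2 (k v)))
    (kinv : ℝ → ℝ)
    (hkinv_left : ∀ v ∈ Set.Icc vlo vhi, kinv (k v) = v)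
    (b1 b2 : ℝ → ℝ)
    (hb1 : ∀ v, b1 v = pinv (∫ t in vlo..v, k t * deriv F1 t))
    (hb2 : ∀ v, b2 v = b1 (kinv v)) :
    (∀ v1 ∈ Set.Icc vlo vhi, ∀ w ∈ Set.Icc vlo vhi,
        v1 * F2 (k w) - p (b1 w) ≤ v1 * F2 (k v1) - p (b1 v1)) ∧
    (∀ v2 ∈ Set.Icc vlo vhi, ∀ w ∈ Set.Icc vlo vhi,
        v2 * F1 (kinv w) - p (b2 w) ≤ v2 * F1 (kinv v2) - p (b2 v2)) := by
  have hk_cont : ContinuousOn k (Icc vlo vhi) := fun x hx =>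
    (hkdiff x hx).continuousAt.continuousWithinAt
  have hg_cont : ContinuousOn (fun t => k t * deriv F1 t) (Icc vlo vhi) := hk_cont.mul hF1'
  have hg_nonneg : ∀ t ∈ Icc vlo vhi, 0 ≤ k t * deriv F1 t := fun t ht =>
    mul_nonneg (hlo.trans (hkbij.mapsTo ht).1) (hF1pos t ht).le
  have hG_cont := continuousOn_primitive_of_continuousOn hg_cont
  have hG' := fun x (hx : x ∈ Ioo vlo vhi) => hasDerivAt_primitive_of_continuousOn hg_cont hx
  have hpb1 : ∀ w ∈ Icc vlo vhi, p (b1 w) = ∫ t in vlo..w, k t * deriv F1 t := fun w hw => by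
    rw [hb1]
    exact hpinv_right _ (integral_nonneg hw.1 fun t ht => hg_nonneg t ⟨ht.1, ht.2.trans hw.2⟩)
  refine ⟨fun v1 hv1 w hw => ?_, fun v2 hv2 w hw => ?_⟩
  · rw [hpb1 w hw, hpb1 v1 hv1]
    refine isMaxOn_Icc_of_hasDerivAt_mul_sub (m := id) hv1
      ((continuousOn_const.mul (hF2.continuous.comp_continuousOn hk_cont)).sub hG_cont)
      monotoneOn_id (fun x hx => div_nonneg (hg_nonneg x (Ioo_subset_Icc_self hx))
        (hlo.trans hx.1.le)) (fun x hx => ?_) hw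
    have hxI := Ioo_subset_Icc_self hx
    exact hasDerivAt_const_mul_comp_sub (hlo.trans_lt hx.1).ne' (hF2 _).hasDerivAt
      (hF2pos _ (hkbij.mapsTo hxI)).ne' (hODE x ⟨hx.1, hx.2.le⟩ ▸ (hkdiff x hxI).hasDerivAt)
      (hG' x hx)
  · obtain ⟨s, hs, rfl⟩ := hkbij.surjOn hw
    obtain ⟨c, hc, rfl⟩ := hkbij.surjOn hv2
    rw [hb2, hb2, hkinv_left s hs, hkinv_left c hc, hpb1 s hs, hpb1 c hc]
    refine isMaxOn_Icc_of_hasDerivAt_mul_sub (ρ := deriv F1) hc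
      ((continuousOn_const.mul hF1.continuous.continuousOn).sub hG_cont) hkmono.monotoneOn
      (fun x hx => (hF1pos x (Ioo_subset_Icc_self hx)).le) (fun x hx => ?_) hs
    exact (((hF1 x).hasDerivAt.const_mul (k c)).sub (hG' x hx)).congr_deriv (by ring)

/-- **Equilibrium strategy in the two-player asymmetric fixed-prize all-pay contest
(Proposition 2 / FIX).**  Types lie in `[vlo, vhi]` with `0 ≤ vlo < vhi`, c.d.f.s
`F₁, F₂` differentiable with continuous positive densities, a fixed prize valued at
`v` by a winner of type `v`, and a continuous, strictly increasing payment function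
`p : [0,∞) → [0,∞)`, surjective onto `[0,∞)` with `p 0 = 0` and inverse `pinv`.
If `k` is a strictly increasing differentiable bijection of `[vlo, vhi]` with
`k vhi = vhi`, `k vlo = vlo`, satisfying the ODE
`k'(v) = k(v) F₁'(v) / (v F₂'(k v))` on `(vlo, vhi]`, then the strategies
`b₁(v) = pinv (∫_{vlo}^{v} k(t) F₁'(t) dt)` and `b₂(v) = b₁(k⁻¹(v))` form a
Bayesian Nash equilibrium: no mimicking deviation is profitable for either player. -/
theorem stmt_3
    (vlo vhi : ℝ) (hlo : 0 ≤ vlo) (hlohi : vlo < vhi)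
    (F1 F2 : ℝ → ℝ)
    (hF1 : Differentiable ℝ F1) (hF2 : Differentiable ℝ F2)
    (hF1' : ContinuousOn (deriv F1) (Set.Icc vlo vhi))
    (hF2' : ContinuousOn (deriv F2) (Set.Icc vlo vhi))
    (hF1pos : ∀ v ∈ Set.Icc vlo vhi, 0 < deriv F1 v)
    (hF2pos : ∀ v ∈ Set.Icc vlo vhi, 0 < deriv F2 v)
    (p : ℝ → ℝ)
    (hpc : ContinuousOn p (Set.Ici 0))
    (hpm : StrictMonoOn p (Set.Ici (0 : ℝ)))
    (hpsurj : ∀ y : ℝ, 0 ≤ y → ∃ x : ℝ, 0 ≤ x ∧ p x = y)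
    (hpnonneg : ∀ x : ℝ, 0 ≤ x → 0 ≤ p x)
    (hp0 : p 0 = 0)
    (pinv : ℝ → ℝ)
    (hpinv_nonneg : ∀ y : ℝ, 0 ≤ y → 0 ≤ pinv y)
    (hpinv_left : ∀ x : ℝ, 0 ≤ x → pinv (p x) = x)
    (hpinv_right : ∀ y : ℝ, 0 ≤ y → p (pinv y) = y)
    (k : ℝ → ℝ)
    (hkmono : StrictMonoOn k (Set.Icc vlo vhi))
    (hkdiff : ∀ v ∈ Set.Icc vlo vhi, DifferentiableAt ℝ k v)
    (hkbij : Set.BijOn k (Set.Icc vlo vhi) (Set.Icc vlo vhi))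
    (hkhi : k vhi = vhi) (hklo : k vlo = vlo)
    (hODE : ∀ v ∈ Set.Ioc vlo vhi,
      deriv k v = k v * deriv F1 v / (v * deriv F2 (k v)))
    (kinv : ℝ → ℝ)
    (hkinv_left : ∀ v ∈ Set.Icc vlo vhi, kinv (k v) = v)
    (hkinv_right : ∀ v ∈ Set.Icc vlo vhi, k (kinv v) = v)
    (b1 b2 : ℝ → ℝ)
    (hb1 : ∀ v, b1 v = pinv (∫ t in vlo..v, k t * deriv F1 t))
    (hb2 : ∀ v, b2 v = b1 (kinv v)) :
    (∀ v1 ∈ Set.Icc vlo vhi, ∀ w ∈ Set.Icc vlo vhi,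
        v1 * F2 (k w) - p (b1 w) ≤ v1 * F2 (k v1) - p (b1 v1)) ∧
    (∀ v2 ∈ Set.Icc vlo vhi, ∀ w ∈ Set.Icc vlo vhi,
        v2 * F1 (kinv w) - p (b2 w) ≤ v2 * F1 (kinv v2) - p (b2 v2)) :=
  stmt_3_general vlo vhi hlo F1 F2 hF1 hF2 hF1' hF1pos hF2pos p pinv hpinv_right k hkmono hkdiff
    hkbij hODE kinv hkinv_left b1 b2 hb1 hb2
end

section
/- For every λ > 0, every v ∈ [0,1], and every b ∈ [0, 1/(2λ)]: v·(2λb)^{3/2}/(3λ²) − b² ≤ v⁴/(12λ²), with equality if and only if b = v²/(2λ). Equivalently, in the OPT mechanism agent 1's strategy b₁(v) = v²/(2λ) is a best response against the prize function Z₁ and agent 2's strategy: the expected utility v·Z₁(b)·F₂(√(2λb)) − b² = v(2λb)^{3/2}/(3λ²) − b² is uniquely maximized at b = v²/(2λ). -/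
/-!
Substitute `t = √(2λb)`, the type of agent 2 whose equilibrium bid is `b`. Then the utility
becomes `(4vt³ - 3t⁴) / (12λ²)`, and the claim is the weighted AM-GM inequality
`4vt³ ≤ v⁴ + 3t⁴`, whose defect factors as `(v - t)² ((v + t)² + 2t²)`.
-/

open Real

lemma four_mul_mul_pow_three_defect (v t : ℝ) :
    v ^ 4 + 3 * t ^ 4 - 4 * v * t ^ 3 = (v - t) ^ 2 * ((v + t) ^ 2 + 2 * t ^ 2) := by
  ring

lemma four_mul_mul_pow_three_le (v t : ℝ) : 4 * v * t ^ 3 ≤ v ^ 4 + 3 * t ^ 4 := by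
  have := four_mul_mul_pow_three_defect v t
  nlinarith [mul_nonneg (sq_nonneg (v - t)) (add_nonneg (sq_nonneg (v + t)) (sq_nonneg t))]

lemma four_mul_mul_pow_three_eq_iff (v t : ℝ) :
    4 * v * t ^ 3 = v ^ 4 + 3 * t ^ 4 ↔ v = t := by
  refine ⟨fun h => ?_, fun h => by subst h; ring⟩
  have hdefect : (v - t) ^ 2 * ((v + t) ^ 2 + 2 * t ^ 2) = 0 := by
    rw [← four_mul_mul_pow_three_defect]; linarith
  rcases mul_eq_zero.mp hdefect with hvt | hsum
  · exact sub_eq_zero.mp (pow_eq_zero_iff two_ne_zero |>.mp hvt)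
  · have ht : t = 0 := by nlinarith [sq_nonneg (v + t), sq_nonneg t]
    subst ht
    nlinarith [sq_nonneg v]

lemma rpow_three_halves_eq_sqrt_pow_three {x : ℝ} (hx : 0 ≤ x) :
    x ^ ((3 : ℝ) / 2) = √x ^ 3 := by
  rw [sqrt_eq_rpow, ← rpow_natCast, ← rpow_mul hx]
  norm_num

lemma utility_eq_of_sqrt {lam b : ℝ} (hlam : 0 < lam) (hb : 0 ≤ b) (v : ℝ) :
    v * (2 * lam * b) ^ ((3 : ℝ) / 2) / (3 * lam ^ 2) - b ^ 2
      = (4 * v * √(2 * lam * b) ^ 3 - 3 * √(2 * lam * b) ^ 4) / (12 * lam ^ 2) := by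
  have hbid : 0 ≤ 2 * lam * b := by positivity
  have hsq : √(2 * lam * b) ^ 4 = (2 * lam * b) ^ 2 := by
    rw [show 4 = 2 * 2 from rfl, pow_mul, sq_sqrt hbid]
  rw [rpow_three_halves_eq_sqrt_pow_three hbid, hsq]
  field_simp
  ring

lemma sqrt_two_mul_mul_eq_iff {lam b v : ℝ} (hlam : 0 < lam) (hb : 0 ≤ b) (hv : 0 ≤ v) :
    √(2 * lam * b) = v ↔ b = v ^ 2 / (2 * lam) := by
  rw [sqrt_eq_iff_eq_sq (by positivity) hv, eq_div_iff (by positivity)]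
  constructor <;> intro h <;> linarith

/-- **Best response of agent 1 in OPT.**
For every `λ > 0`, `v ∈ [0,1]` and `b ∈ [0, 1/(2λ)]`:
`v (2λb)^{3/2} / (3λ²) − b² ≤ v⁴ / (12λ²)`, with equality iff `b = v²/(2λ)`;
i.e. agent 1's strategy `b₁(v) = v²/(2λ)` is a best response against the optimal
prize function `Z₁` and agent 2's equilibrium strategy. -/
theorem stmt_10 :
    ∀ lam : ℝ, 0 < lam →
    ∀ v ∈ Set.Icc (0 : ℝ) 1, ∀ b ∈ Set.Icc (0 : ℝ) (1 / (2 * lam)),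
      (v * (2 * lam * b) ^ ((3 : ℝ) / 2) / (3 * lam ^ 2) - b ^ 2
          ≤ v ^ 4 / (12 * lam ^ 2) ∧
        (v * (2 * lam * b) ^ ((3 : ℝ) / 2) / (3 * lam ^ 2) - b ^ 2
            = v ^ 4 / (12 * lam ^ 2) ↔ b = v ^ 2 / (2 * lam))) := by
  intro lam hlam v ⟨hv, _⟩ b ⟨hb, _⟩
  have hden : 0 < 12 * lam ^ 2 := by positivity
  set t := √(2 * lam * b)
  rw [utility_eq_of_sqrt hlam hb v, div_le_div_iff_of_pos_right hden,
    div_left_inj' hden.ne', ← sqrt_two_mul_mul_eq_iff hlam hb hv, eq_comm (a := t),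
    ← four_mul_mul_pow_three_eq_iff v t]
  constructor
  · linarith [four_mul_mul_pow_three_le v t]
  · constructor <;> intro h <;> linarith
end

section
/- For every λ > 0 and every natural number n ≥ 1: n·∫₀¹ (v²/(2λ)) dv − λ·∫₀¹ (v^{4−n}/(3λ²))·n·v^{n−1} dv = n/(12λ). That is, in the OPT-n mechanism the expected total effort is n/(6λ), the expected prize cost is n/(12λ), and the principal's profit π^{opt-n} = n/(12λ) grows linearly in the number of agents n. -/
/-! The prize cost integrand collapses: for `v > 0`, `v^{4-n} · v^{n-1} = v³`, so the density of the
winner's type exactly cancels the `n`-dependence of the prize, leaving a prize cost of `n/(12λ)`,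
half the expected effort `n/(6λ)`. -/

open intervalIntegral

theorem integral_sq_div_zero_one (c : ℝ) : ∫ v in (0:ℝ)..1, v ^ 2 / c = 1 / (3 * c) := by
  rw [integral_div, integral_pow]
  norm_num
  ring

theorem integral_rpow_mul_rpow_zero_one {a b : ℝ} (h : -1 < a + b) :
    ∫ v in (0:ℝ)..1, v ^ a * v ^ b = 1 / (a + b + 1) := by
  have hmul : ∀ᵐ v, v ∈ Set.uIoc (0:ℝ) 1 → v ^ a * v ^ b = v ^ (a + b) :=
    MeasureTheory.ae_of_all _ fun v hv ↦
      (Real.rpow_add (Set.uIoc_of_le (zero_le_one' ℝ) ▸ hv).1 a b).symm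
  rw [integral_congr_ae hmul, integral_rpow (Or.inl h), Real.zero_rpow (by linarith)]
  simp

theorem integral_opt_prize (lam : ℝ) (n : ℕ) :
    ∫ v in (0:ℝ)..1, (v ^ ((4 : ℝ) - n) / (3 * lam ^ 2)) * (n * v ^ ((n : ℝ) - 1))
      = n / (12 * lam ^ 2) := by
  simp_rw [show ∀ v : ℝ, (v ^ ((4 : ℝ) - n) / (3 * lam ^ 2)) * (n * v ^ ((n : ℝ) - 1))
      = n / (3 * lam ^ 2) * (v ^ ((4 : ℝ) - n) * v ^ ((n : ℝ) - 1)) from fun v => by ring]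
  rw [integral_const_mul, integral_rpow_mul_rpow_zero_one (by linarith)]
  ring

/-- **Linear profit growth of OPT-n.**
For every `λ > 0` and `n ≥ 1`: in the OPT-n mechanism the expected total effort
`n ∫₀¹ v²/(2λ) dv` equals `n/(6λ)`, the expected prize cost
`λ ∫₀¹ (v^{4−n}/(3λ²)) n v^{n−1} dv` equals `n/(12λ)`, and the principal's profit
`π^{opt-n}` equals `n/(12λ)`, growing linearly in the number of agents `n`. -/
theorem stmt_17 :
    ∀ lam : ℝ, 0 < lam → ∀ n : ℕ, 1 ≤ n →
      ((n : ℝ) * ∫ v in (0:ℝ)..1, v ^ 2 / (2 * lam)) = (n : ℝ) / (6 * lam) ∧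
      (lam * ∫ v in (0:ℝ)..1,
          (v ^ ((4 : ℝ) - (n : ℝ)) / (3 * lam ^ 2)) * ((n : ℝ) * v ^ ((n : ℝ) - 1)))
        = (n : ℝ) / (12 * lam) ∧
      (((n : ℝ) * ∫ v in (0:ℝ)..1, v ^ 2 / (2 * lam)) -
          lam * ∫ v in (0:ℝ)..1,
            (v ^ ((4 : ℝ) - (n : ℝ)) / (3 * lam ^ 2)) * ((n : ℝ) * v ^ ((n : ℝ) - 1)))
        = (n : ℝ) / (12 * lam) := by
  intro lam hlam n _
  have effort : ∫ v in (0:ℝ)..1, v ^ 2 / (2 * lam) = 1 / (6 * lam) := by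
    rw [integral_sq_div_zero_one]; ring
  have prize : lam * ∫ v in (0:ℝ)..1,
      (v ^ ((4 : ℝ) - (n : ℝ)) / (3 * lam ^ 2)) * ((n : ℝ) * v ^ ((n : ℝ) - 1))
        = n / (12 * lam) := by
    rw [integral_opt_prize]; field_simp
  refine ⟨by rw [effort]; ring, prize, ?_⟩
  rw [effort, prize]; ring
end
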